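/- arXiv:1311.5631 — 3 statements merged into one kernel-verified Lean document; each statement's English description precedes it below -/
import Mathlib

section
/- The quantity ⟨D̃ψ̃/ds | Dψ/ds⟩ is gauge invariant: for binormalized curves ψ, ψ̃ and any differentiable ζ : ℝ → ℂ, the value of ⟨ψ̃' − Ã*ψ̃ | ψ' − Aψ⟩ computed for the gauge-transformed curves e^{iζ}ψ, e^{iζ*}ψ̃ equals its value for the original curves, where A = ⟨ψ̃|ψ'⟩ and the dual connection is Ã(s) with conj(Ã) appearing appropriately. -/
/-!
Write the gauge-transformed curves as `c • ψ` and `c̃ • ψ̃` with `c = exp (iζ)`, `c̃ = exp (iζ*)`,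
so that `conj c̃ * c = 1`. Their derivatives are `c • (ψ' + a • ψ)` and `c̃ • (ψ̃' + b • ψ̃)`, and the
connection shifts to `A + a`. Hence `Dψ` is merely rescaled by `c`, while `D̃ψ̃` is rescaled by `c̃`
and picks up a multiple of `ψ̃`. That extra term drops out of the pairing because binormalization
makes `Dψ` orthogonal to `ψ̃`; so the invariance holds for arbitrary `a` and `b`.
-/

/-- Standard Hermitian inner product on ℂ^N, conjugate-linear in the first slot. -/
noncomputable def inn {N : ℕ} (x y : Fin N → ℂ) : ℂ := ∑ i, (starRingEnd ℂ) (x i) * y i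

open ComplexConjugate

namespace inn

variable {N : ℕ}

lemma smul_left (c : ℂ) (x y : Fin N → ℂ) : inn (c • x) y = conj c * inn x y := by
  simp [inn, Finset.mul_sum, mul_assoc]

lemma smul_right (c : ℂ) (x y : Fin N → ℂ) : inn x (c • y) = c * inn x y := by
  simp [inn, Finset.mul_sum, mul_left_comm]

lemma add_right (x y z : Fin N → ℂ) : inn x (y + z) = inn x y + inn x z := by
  simp [inn, mul_add, Finset.sum_add_distrib]

lemma add_left (x y z : Fin N → ℂ) : inn (x + y) z = inn x z + inn y z := by
  simp [inn, add_mul, Finset.sum_add_distrib]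

lemma sub_right (x y z : Fin N → ℂ) : inn x (y - z) = inn x y - inn x z := by
  simp [inn, mul_sub, Finset.sum_sub_distrib]

end inn

section Gauge

variable {N : ℕ} (ψt ψ dψt dψ : Fin N → ℂ)

/-- `Dψ/ds = ψ' - A ψ` with `A = ⟨ψ̃|ψ'⟩`. -/
noncomputable def covDeriv : Fin N → ℂ := dψ - inn ψt dψ • ψ

/-- `D̃ψ̃/ds = ψ̃' - conj A • ψ̃` with `A = ⟨ψ̃|ψ'⟩`. -/
noncomputable def dualCovDeriv : Fin N → ℂ := dψt - conj (inn ψt dψ) • ψt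

variable {ψt ψ}

lemma inn_covDeriv_eq_zero (hbin : inn ψt ψ = 1) : inn ψt (covDeriv ψt ψ dψ) = 0 := by
  rw [covDeriv, inn.sub_right, inn.smul_right, hbin, mul_one, sub_self]

variable {c ct : ℂ} (a b : ℂ)

lemma inn_gauge (hbin : inn ψt ψ = 1) (hc : conj ct * c = 1) :
    inn (ct • ψt) (c • (dψ + a • ψ)) = inn ψt dψ + a := by
  rw [inn.smul_left, inn.smul_right, inn.add_right, inn.smul_right, hbin, ← mul_assoc, hc,
    one_mul, mul_one]

lemma covDeriv_gauge (hbin : inn ψt ψ = 1) (hc : conj ct * c = 1) :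
    covDeriv (ct • ψt) (c • ψ) (c • (dψ + a • ψ)) = c • covDeriv ψt ψ dψ := by
  rw [covDeriv, covDeriv, inn_gauge dψ a hbin hc, smul_comm _ c ψ, ← smul_sub]
  congr 1
  module

lemma dualCovDeriv_gauge (hbin : inn ψt ψ = 1) (hc : conj ct * c = 1) :
    dualCovDeriv (ct • ψt) (ct • (dψt + b • ψt)) (c • (dψ + a • ψ)) =
      ct • (dualCovDeriv ψt dψt dψ + (b - conj a) • ψt) := by
  rw [dualCovDeriv, dualCovDeriv, inn_gauge dψ a hbin hc, map_add, smul_comm _ ct ψt,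
    ← smul_sub]
  congr 1
  module

theorem inn_dualCovDeriv_covDeriv_gauge (hbin : inn ψt ψ = 1) (hc : conj ct * c = 1) :
    inn (dualCovDeriv (ct • ψt) (ct • (dψt + b • ψt)) (c • (dψ + a • ψ)))
        (covDeriv (ct • ψt) (c • ψ) (c • (dψ + a • ψ))) =
      inn (dualCovDeriv ψt dψt dψ) (covDeriv ψt ψ dψ) := by
  rw [dualCovDeriv_gauge dψt dψ a b hbin hc, covDeriv_gauge dψ a hbin hc, inn.smul_left,
    inn.smul_right, inn.add_left, inn.smul_left, inn_covDeriv_eq_zero dψ hbin, ← mul_assoc, hc]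
  ring

end Gauge

lemma HasDerivAt.cexp_smul {E : Type*} [NormedAddCommGroup E] [NormedSpace ℂ E]
    {f : ℝ → ℂ} {ψ : ℝ → E} {f' : ℂ} {ψ' : E} {s : ℝ}
    (hf : HasDerivAt f f' s) (hψ : HasDerivAt ψ ψ' s) :
    HasDerivAt (fun u => Complex.exp (f u) • ψ u) (Complex.exp (f s) • (ψ' + f' • ψ s)) s := by
  refine (hf.cexp.smul hψ).congr_deriv ?_
  rw [smul_add, mul_smul, add_comm]

lemma conj_cexp_I_mul_conj_mul_cexp_I_mul (z : ℂ) :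
    conj (Complex.exp (Complex.I * conj z)) * Complex.exp (Complex.I * z) = 1 := by
  rw [← Complex.exp_conj, ← Complex.exp_add]
  simp

/-- The quantity ⟨D̃ψ̃/ds | Dψ/ds⟩, with A(s) = ⟨ψ̃|ψ'⟩, Dψ/ds = ψ' − Aψ and
D̃ψ̃/ds = ψ̃' − conj(A)ψ̃, is invariant under the gauge transformation ψ ↦ e^{iζ}ψ,
ψ̃ ↦ e^{iζ*}ψ̃ for binormalized curves. -/
theorem stmt7 {N : ℕ} (ψ ψt dψ dψt : ℝ → Fin N → ℂ) (ζ dζ : ℝ → ℂ)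
    (hψ : ∀ s, HasDerivAt ψ (dψ s) s) (hψt : ∀ s, HasDerivAt ψt (dψt s) s)
    (hζ : ∀ s, HasDerivAt ζ (dζ s) s)
    (hbin : ∀ s, inn (ψt s) (ψ s) = 1) :
    ∀ s : ℝ,
      inn (deriv (fun u => Complex.exp (Complex.I * (starRingEnd ℂ) (ζ u)) • ψt u) s
            - ((starRingEnd ℂ)
                (inn (Complex.exp (Complex.I * (starRingEnd ℂ) (ζ s)) • ψt s)
                  (deriv (fun u => Complex.exp (Complex.I * ζ u) • ψ u) s)))
              • (Complex.exp (Complex.I * (starRingEnd ℂ) (ζ s)) • ψt s))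
          (deriv (fun u => Complex.exp (Complex.I * ζ u) • ψ u) s
            - (inn (Complex.exp (Complex.I * (starRingEnd ℂ) (ζ s)) • ψt s)
                (deriv (fun u => Complex.exp (Complex.I * ζ u) • ψ u) s))
              • (Complex.exp (Complex.I * ζ s) • ψ s))
      = inn (dψt s - ((starRingEnd ℂ) (inn (ψt s) (dψ s))) • ψt s)
            (dψ s - (inn (ψt s) (dψ s)) • ψ s) := by
  intro s
  have hgauged : HasDerivAt (fun u => Complex.exp (Complex.I * ζ u) • ψ u)
      (Complex.exp (Complex.I * ζ s) • (dψ s + (Complex.I * dζ s) • ψ s)) s :=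
    ((hζ s).const_mul Complex.I).cexp_smul (hψ s)
  have hgauged_dual : HasDerivAt (fun u => Complex.exp (Complex.I * conj (ζ u)) • ψt u)
      (Complex.exp (Complex.I * conj (ζ s)) • (dψt s + (Complex.I * conj (dζ s)) • ψt s)) s :=
    ((hζ s).star.const_mul Complex.I).cexp_smul (hψt s)
  rw [hgauged.deriv, hgauged_dual.deriv]
  exact inn_dualCovDeriv_covDeriv_gauge (dψt s) (dψ s) _ _ (hbin s)
    (conj_cexp_I_mul_conj_mul_cexp_I_mul (ζ s))
end

section
/- Along the straight-line geodesic φ(s) = (1−s)ψ₁ + s·φ(1), φ̃(s) = (1−s)ψ̃₁ + s·φ̃(1), with ⟨ψ̃₁|ψ₁⟩ = ⟨φ̃(1)|φ(1)⟩ = 1, ⟨φ̃|φ'⟩ = ⟨φ̃'|φ⟩ = 0 everywhere, the 'in-phase' quantity q(s) = ⟨ψ̃₁|φ(s)⟩ / ⟨φ̃(s)|ψ₁⟩ equals 1 for all s ∈ [0,1] where the denominator is nonzero; i.e., ⟨ψ̃₁|φ(s)⟩ = ⟨φ̃(s)|ψ₁⟩ for all s ∈ [0,1]. -/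
section Inn

variable {N : ℕ}

lemma inn_add_left (x y z : Fin N → ℂ) : inn (x + y) z = inn x z + inn y z := by
  simp [inn, add_mul, Finset.sum_add_distrib]

lemma inn_smul_left (c : ℂ) (x z : Fin N → ℂ) : inn (c • x) z = starRingEnd ℂ c * inn x z := by
  simp [inn, Finset.mul_sum, mul_assoc]

lemma inn_add_right (x y z : Fin N → ℂ) : inn x (y + z) = inn x y + inn x z := by
  simp [inn, mul_add, Finset.sum_add_distrib]

lemma inn_smul_right (c : ℂ) (x z : Fin N → ℂ) : inn x (c • z) = c * inn x z := by
  simp only [inn, Pi.smul_apply, smul_eq_mul, Finset.mul_sum]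
  exact Finset.sum_congr rfl fun _ _ => by ring

lemma inn_sub_right (x y z : Fin N → ℂ) : inn x (y - z) = inn x y - inn x z := by
  simp [inn, mul_sub, Finset.sum_sub_distrib]

lemma inn_eq_of_inn_sub_eq_zero {x y z : Fin N → ℂ} (h : inn x (y - z) = 0) :
    inn x y = inn x z := by
  rwa [inn_sub_right, sub_eq_zero] at h

lemma inn_affine_left_eq_one {x y z : Fin N → ℂ} (hx : inn x z = 1) (hy : inn y z = 1) (s : ℝ) :
    inn (((1 : ℂ) - s) • x + (s : ℂ) • y) z = 1 := by
  simp only [inn_add_left, inn_smul_left, map_sub, map_one, Complex.conj_ofReal, hx, hy]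
  ring

lemma inn_affine_right_eq_one {x y z : Fin N → ℂ} (hy : inn x y = 1) (hz : inn x z = 1) (c : ℂ) :
    inn x ((1 - c) • y + c • z) = 1 := by
  rw [inn_add_right, inn_smul_right, inn_smul_right, hy, hz]
  ring

end Inn

theorem stmt10_general {N : ℕ} (ψ1 ψt1 φ1 φt1 : Fin N → ℂ)
    (h1 : inn ψt1 ψ1 = 1) (h2 : inn φt1 φ1 = 1)
    (hconn : ∀ s : ℝ, s ∈ Set.Icc (0:ℝ) 1 →
      inn (((1:ℂ) - (s:ℂ)) • ψt1 + (s:ℂ) • φt1) (φ1 - ψ1) = 0) :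
    ∀ s : ℝ, s ∈ Set.Icc (0:ℝ) 1 →
      inn ψt1 (((1:ℂ) - (s:ℂ)) • ψ1 + (s:ℂ) • φ1)
        = inn (((1:ℂ) - (s:ℂ)) • ψt1 + (s:ℂ) • φt1) ψ1 := by
  have hψt1 : inn ψt1 φ1 = 1 := by
    have h := hconn 0 (by simp)
    simp only [Complex.ofReal_zero, sub_zero, one_smul, zero_smul, add_zero] at h
    rw [inn_eq_of_inn_sub_eq_zero h, h1]
  have hφt1 : inn φt1 ψ1 = 1 := by
    have h := hconn 1 (by simp)
    simp only [Complex.ofReal_one, sub_self, one_smul, zero_smul, zero_add] at h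
    rw [← inn_eq_of_inn_sub_eq_zero h, h2]
  intro s _
  rw [inn_affine_right_eq_one h1 hψt1, inn_affine_left_eq_one h1 hφt1]

/-- Along the straight-line geodesic φ(s) = (1−s)ψ₁ + s·φ₁,
φ̃(s) = (1−s)ψ̃₁ + s·φ̃₁ with ⟨ψ̃₁|ψ₁⟩ = ⟨φ̃₁|φ₁⟩ = 1 and vanishing connection
⟨φ̃(s)|φ'(s)⟩ = 0 = ⟨φ̃'(s)|φ(s)⟩ on [0,1], the states stay "in phase":
⟨ψ̃₁|φ(s)⟩ = ⟨φ̃(s)|ψ₁⟩ for all s ∈ [0,1]. -/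
theorem stmt10 {N : ℕ} (ψ1 ψt1 φ1 φt1 : Fin N → ℂ)
    (h1 : inn ψt1 ψ1 = 1) (h2 : inn φt1 φ1 = 1)
    (hconn : ∀ s : ℝ, s ∈ Set.Icc (0:ℝ) 1 →
      inn (((1:ℂ) - (s:ℂ)) • ψt1 + (s:ℂ) • φt1) (φ1 - ψ1) = 0)
    (hconn' : ∀ s : ℝ, s ∈ Set.Icc (0:ℝ) 1 →
      inn (φt1 - ψt1) (((1:ℂ) - (s:ℂ)) • ψ1 + (s:ℂ) • φ1) = 0) :
    ∀ s : ℝ, s ∈ Set.Icc (0:ℝ) 1 →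
      inn ψt1 (((1:ℂ) - (s:ℂ)) • ψ1 + (s:ℂ) • φ1)
        = inn (((1:ℂ) - (s:ℂ)) • ψt1 + (s:ℂ) • φt1) ψ1 :=
  stmt10_general ψ1 ψt1 φ1 φt1 h1 h2 hconn
end

section
/- The geometric phase γ(0,t) = −(i/2)Log[⟨ψ̃(0)|ψ(t)⟩/⟨ψ̃(t)|ψ(0)⟩] + ∫₀ᵗ ⟨ψ̃|Hψ⟩dt' is invariant (mod π) under time-dependent gauge transformations ψ(t) ↦ e^{iζ(t)}ψ(t), ψ̃(t) ↦ e^{iζ(t)*}ψ̃(t) with ζ(0) = 0, when the Hamiltonian is transformed so that the Schrödinger equation still holds, i.e., the sum of the Pancharatnam term and minus the dynamical phase changes by an integer multiple of π. -/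
/-!
Since `∫₀ᵗ ζ' = ζ t - ζ 0 = ζ t`, the gauge shift changes the dynamical term `i ∫₀ᵗ A` by
`i · i ζ t = -ζ t`. The principal logarithm of `exp (2iζ t) * r` differs from `2iζ t + Log r`
by some `2πi n`, so the Pancharatnam term changes by `ζ t + π n`, and the two shifts cancel
up to `π n`.
-/

open Complex

theorem Complex.exists_log_exp_mul_eq {r : ℂ} (hr : r ≠ 0) (w : ℂ) :
    ∃ n : ℤ, log (exp w * r) = w + log r + n * (2 * Real.pi * I) := by
  apply exp_eq_exp_iff_exists_int.mp
  rw [exp_log (mul_ne_zero (exp_ne_zero w) hr), exp_add, exp_log hr]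

theorem intervalIntegral.integral_add_const_mul_of_hasDerivAt {f g g' : ℝ → ℂ} {a b : ℝ}
    (c : ℂ) (hg : ∀ s ∈ Set.uIcc a b, HasDerivAt g (g' s) s) (hf : IntervalIntegrable f MeasureTheory.volume a b)
    (hg' : IntervalIntegrable g' MeasureTheory.volume a b) :
    ∫ s in a..b, (f s + c * g' s) = (∫ s in a..b, f s) + c * (g b - g a) := by
  rw [integral_add hf (hg'.const_mul c), integral_const_mul,
    integral_eq_sub_of_hasDerivAt hg hg']

/-- Gauge invariance (mod π) of the geometric phase: under a gauge
transformation with ζ(0) = 0, the ratio r = ⟨ψ̃(0)|ψ(t)⟩/⟨ψ̃(t)|ψ(0)⟩ is multiplied by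
e^{2iζ(t)} and the connection A shifts to A + iζ'; the combination
−(i/2)Log r + i∫₀ᵗ A changes by an integer multiple of π. -/
theorem stmt16 (A ζ dζ : ℝ → ℂ) (t : ℝ) (r : ℂ) (hr : r ≠ 0)
    (hζ : ∀ s, HasDerivAt ζ (dζ s) s) (hζ0 : ζ 0 = 0)
    (hA : IntervalIntegrable A MeasureTheory.volume 0 t)
    (hdζ : IntervalIntegrable dζ MeasureTheory.volume 0 t) :
    ∃ k : ℤ,
      (-(Complex.I / 2) * Complex.log (Complex.exp (2 * Complex.I * ζ t) * r)
          + Complex.I * ∫ s in (0:ℝ)..t, (A s + Complex.I * dζ s))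
        - (-(Complex.I / 2) * Complex.log r + Complex.I * ∫ s in (0:ℝ)..t, A s)
      = (k : ℂ) * (Real.pi : ℂ) := by
  obtain ⟨n, hlog⟩ := exists_log_exp_mul_eq hr (2 * I * ζ t)
  refine ⟨n, ?_⟩
  rw [hlog, intervalIntegral.integral_add_const_mul_of_hasDerivAt I (fun s _ => hζ s) hA hdζ, hζ0]
  linear_combination -(n * Real.pi : ℂ) * I_sq
end
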